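/- Let r ∈ ℚ_{>0} be such that S_r is atomic (i.e., r = 1 or n(r) > 1). (1) If r < 1, then ω(1) = ∞: for every n ∈ ℕ there exist atoms a_1, …, a_t of S_r with 1 dividing a_1 + ⋯ + a_t in S_r but with 1 dividing no subsum of at most n of the a_i. (2) If r ∈ ℚ_{>1} \ ℕ, then ω(1) = d(r). -/

import Mathlib

open Finsupp
open scoped ENNReal

/-- The Puiseux monoid (rational cyclic semiring) `S_r`, the additive submonoid of `ℚ`
generated by the nonnegative powers of `r`. -/
def S (r : ℚ) : AddSubmonoid ℚ := AddSubmonoid.closure {x : ℚ | ∃ n : ℕ, x = r ^ n}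

/-- A factorization of `x` over the powers of `r`: a finitely supported choice of
coefficients `α i` with `∑ α i * r ^ i = x`. -/
def IsFactorization (r x : ℚ) (α : ℕ →₀ ℕ) : Prop :=
  (α.sum fun i c => (c : ℚ) * r ^ i) = x

/-- The length of a factorization. -/
def flen (α : ℕ →₀ ℕ) : ℕ := α.sum fun _ c => c

/-- The set of lengths of factorizations of `x` over the powers of `r`. -/
def lengthSet (r x : ℚ) : Set ℕ :=
  {t | ∃ α : ℕ →₀ ℕ, IsFactorization r x α ∧ flen α = t}

/-- An atom of `S_r`: a nonzero element that is not the sum of two nonzero elements. -/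
def IsAtomS (r a : ℚ) : Prop :=
  a ∈ S r ∧ a ≠ 0 ∧ ¬ ∃ y z : ℚ, y ∈ S r ∧ z ∈ S r ∧ y ≠ 0 ∧ z ≠ 0 ∧ a = y + z

/-- The set of lengths of `x` as sums of atoms of `S_r`. -/
def atomLengthSet (r x : ℚ) : Set ℕ :=
  {t | ∃ f : Fin t → ℚ, (∀ i, IsAtomS r (f i)) ∧ ∑ i, f i = x}

/-- `x` divides `y` in `S_r`. -/
def DvdS (r x y : ℚ) : Prop := y - x ∈ S r

/-- `n` bounds the omega-primality of `x` in `S_r`. -/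
def OmegaBound (r x : ℚ) (n : ℕ) : Prop :=
  ∀ (t : ℕ) (a : Fin t → ℚ), (∀ i, IsAtomS r (a i)) → DvdS r x (∑ i, a i) →
    ∃ T : Finset (Fin t), T.card ≤ n ∧ DvdS r x (∑ i ∈ T, a i)

/-- The omega invariant of `x` in `S_r`. -/
noncomputable def omegaS (r x : ℚ) : ℕ∞ :=
  sInf {N : ℕ∞ | ∃ n : ℕ, N = n ∧ OmegaBound r x n}

/-!
Write `r = n / d`. Trading `d` copies of `r ^ j` (`j ≥ 1`) for `n` copies of `r ^ (j - 1)` leads to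
canonical factorizations, in which every `r ^ j` with `j ≥ 1` occurs fewer than `d` times. Clearing
denominators and reducing modulo `d`, the top multiplicities of two factorizations of the same
element agree modulo `d`; descending through the exponents, the canonical factorization of an
element uses the atom `1` at least as often as any other. Hence `1` divides a sum of atoms `r ^ j`
only if the atom `1` occurs or some `r ^ j` with `j ≥ 1` occurs `d` times, and for `r > 1` these `d`
copies alone are divisible by `1`: so `ω(1) ≤ d`. Conversely `d` copies of the atom `r` add up to
`n`, and no fewer of them are divisible by `1`. For `r < 1`, the `d ^ k` copies of the atom `r ^ k`
add up to `n ^ k`, while any `N` of them add up to less than `1` once `k` is large.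
-/

open Multiset

def powSum (r : ℚ) (m : Multiset ℕ) : ℚ := (m.map (r ^ ·)).sum

section powSum

variable {r : ℚ}

@[simp] lemma powSum_zero : powSum r 0 = 0 := rfl

@[simp] lemma powSum_cons (j : ℕ) (m : Multiset ℕ) : powSum r (j ::ₘ m) = r ^ j + powSum r m := by
  simp [powSum]

@[simp] lemma powSum_add (m m' : Multiset ℕ) : powSum r (m + m') = powSum r m + powSum r m' := by
  simp [powSum]

@[simp] lemma powSum_replicate (c j : ℕ) : powSum r (replicate c j) = c * r ^ j := by
  simp [powSum, nsmul_eq_mul]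

@[simp] lemma powSum_singleton (j : ℕ) : powSum r {j} = r ^ j := by simp [powSum]

lemma powSum_eq_count_add_filter (j : ℕ) (m : Multiset ℕ) :
    powSum r m = m.count j * r ^ j + powSum r (m.filter (· ≠ j)) := by
  conv_lhs => rw [← filter_add_not (· = j) m]
  rw [powSum_add, Multiset.filter_eq', powSum_replicate]

lemma powSum_eq_count_zero {m : Multiset ℕ} (hm : ∀ j ∈ m, j = 0) : powSum r m = m.count 0 := by
  rw [powSum_eq_count_add_filter 0, filter_eq_nil.mpr (fun j hj hj0 => hj0 (hm j hj))]
  simp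

lemma powSum_nonneg (hr : 0 ≤ r) (m : Multiset ℕ) : 0 ≤ powSum r m :=
  sum_nonneg fun _ hx => by obtain ⟨j, -, rfl⟩ := mem_map.mp hx; positivity

lemma pow_le_powSum (hr : 0 ≤ r) {j : ℕ} {m : Multiset ℕ} (hj : j ∈ m) : r ^ j ≤ powSum r m := by
  obtain ⟨m', rfl⟩ := exists_cons_of_mem hj
  simpa using powSum_nonneg hr m'

lemma powSum_pos (h0 : 0 < r) {m : Multiset ℕ} (hm : m ≠ 0) : 0 < powSum r m := by
  obtain ⟨j, hj⟩ := exists_mem_of_ne_zero hm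
  exact (pow_pos h0 j).trans_le (pow_le_powSum h0.le hj)

lemma mem_S_iff {x : ℚ} : x ∈ S r ↔ ∃ m : Multiset ℕ, powSum r m = x := by
  constructor
  · intro hx
    induction hx using AddSubmonoid.closure_induction with
    | mem y hy => obtain ⟨j, rfl⟩ := hy; exact ⟨{j}, powSum_singleton j⟩
    | zero => exact ⟨0, rfl⟩
    | add y z _ _ hy hz =>
      obtain ⟨my, rfl⟩ := hy
      obtain ⟨mz, rfl⟩ := hz
      exact ⟨my + mz, powSum_add my mz⟩
  · rintro ⟨m, rfl⟩
    induction m using Multiset.induction with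
    | empty => exact zero_mem _
    | cons j m ih => exact powSum_cons j m ▸ add_mem (AddSubmonoid.subset_closure ⟨j, rfl⟩) ih

lemma pow_mem_S (k : ℕ) : r ^ k ∈ S r := AddSubmonoid.subset_closure ⟨k, rfl⟩

lemma powSum_mem_S (m : Multiset ℕ) : powSum r m ∈ S r := mem_S_iff.mpr ⟨m, rfl⟩

lemma natCast_mem_S (c : ℕ) : (c : ℚ) ∈ S r := by
  simpa using powSum_mem_S (r := r) (replicate c 0)

lemma nonneg_of_mem_S (hr : 0 ≤ r) {x : ℚ} (hx : x ∈ S r) : 0 ≤ x := by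
  obtain ⟨m, rfl⟩ := mem_S_iff.mp hx
  exact powSum_nonneg hr m

end powSum

section clearedSum

variable {r : ℚ}

lemma den_mul_eq_num (h0 : 0 < r) : (r.den : ℚ) * r = r.num.natAbs := by
  rw [Nat.cast_natAbs, abs_of_pos (Rat.num_pos.mpr h0), mul_comm]
  exact_mod_cast Rat.mul_den_eq_num r

lemma den_pow_mul_pow (h0 : 0 < r) {j M : ℕ} (hj : j ≤ M) :
    (r.den : ℚ) ^ M * r ^ j = ((r.num.natAbs ^ j * r.den ^ (M - j) : ℕ) : ℚ) := by
  obtain ⟨i, rfl⟩ := Nat.exists_eq_add_of_le hj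
  rw [Nat.add_sub_cancel_left, Nat.cast_mul, Nat.cast_pow, Nat.cast_pow, ← den_mul_eq_num h0]
  ring

/-- `r.den ^ M * powSum r m` as a natural number, for `m` with exponents at most `M`. -/
def clearedSum (r : ℚ) (M : ℕ) (m : Multiset ℕ) : ℕ :=
  (m.map fun j => r.num.natAbs ^ j * r.den ^ (M - j)).sum

lemma cast_clearedSum (h0 : 0 < r) {M : ℕ} {m : Multiset ℕ} (hm : ∀ j ∈ m, j ≤ M) :
    (clearedSum r M m : ℚ) = r.den ^ M * powSum r m := by
  rw [clearedSum, powSum, ← sum_map_mul_left, Nat.cast_multiset_sum, map_map]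
  exact congrArg Multiset.sum (map_congr rfl fun j hj => (den_pow_mul_pow h0 (hm j hj)).symm)

lemma clearedSum_cons (M j : ℕ) (m : Multiset ℕ) :
    clearedSum r M (j ::ₘ m) = r.num.natAbs ^ j * r.den ^ (M - j) + clearedSum r M m := by
  simp [clearedSum]

lemma clearedSum_modEq {M : ℕ} {m : Multiset ℕ} (hm : ∀ j ∈ m, j ≤ M) :
    clearedSum r M m ≡ m.count M * r.num.natAbs ^ M [MOD r.den] := by
  induction m using Multiset.induction with
  | empty => simp [clearedSum, Nat.ModEq]
  | cons j m ih =>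
    have ih := ih fun i hi => hm i (mem_cons_of_mem hi)
    rw [clearedSum_cons]
    obtain rfl | hjM := (hm j (mem_cons_self j m)).eq_or_lt
    · rw [count_cons_self, Nat.sub_self, pow_zero, mul_one, add_mul, one_mul, add_comm]
      exact ih.add_right _
    · have hterm : r.num.natAbs ^ j * r.den ^ (M - j) ≡ 0 [MOD r.den] :=
        Nat.modEq_zero_iff_dvd.mpr ((dvd_pow_self _ (Nat.sub_pos_of_lt hjM).ne').mul_left _)
      simpa [count_cons_of_ne hjM.ne'] using hterm.add ih

lemma pow_dvd_clearedSum {k M : ℕ} {m : Multiset ℕ} (hm : ∀ j ∈ m, k ≤ j) :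
    r.num.natAbs ^ k ∣ clearedSum r M m :=
  dvd_sum fun _ hx => by
    obtain ⟨j, hj, rfl⟩ := mem_map.mp hx
    exact (pow_dvd_pow _ (hm j hj)).mul_right _

end clearedSum

section factorizations

variable {r : ℚ}

lemma powSum_ne_pow_of_lt (h0 : 0 < r) (hn : 1 < r.num) {k : ℕ} {m : Multiset ℕ}
    (hm : ∀ j ∈ m, k < j) : powSum r m ≠ r ^ k := by
  intro h
  set M := m.sup ⊔ k
  have hw : clearedSum r M m = r.num.natAbs ^ k * r.den ^ (M - k) := by
    have := cast_clearedSum h0 (M := M) (m := m) fun j hj => le_sup_of_le_left (le_sup hj)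
    rw [h, den_pow_mul_pow h0 le_sup_right] at this
    exact_mod_cast this
  have hdvd : r.num.natAbs ^ (k + 1) ∣ clearedSum r M m := pow_dvd_clearedSum hm
  rw [hw, pow_succ] at hdvd
  have hpos : 0 < r.num.natAbs ^ k := pow_pos (by omega) k
  have := (r.reduced.pow_right (M - k)).eq_one_of_dvd (Nat.dvd_of_mul_dvd_mul_left hpos hdvd)
  omega

lemma count_modEq_of_powSum_eq (h0 : 0 < r) {M : ℕ} {m m' : Multiset ℕ}
    (hm : ∀ j ∈ m, j ≤ M) (hm' : ∀ j ∈ m', j ≤ M) (h : powSum r m = powSum r m') :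
    m.count M ≡ m'.count M [MOD r.den] := by
  have hw : clearedSum r M m = clearedSum r M m' := by
    have := cast_clearedSum h0 hm
    rw [h, ← cast_clearedSum h0 hm'] at this
    exact_mod_cast this
  refine Nat.ModEq.cancel_right_of_coprime (r.reduced.symm.pow_right M) ?_
  exact (clearedSum_modEq hm).symm.trans (hw ▸ clearedSum_modEq hm')

/-- The factorizations reached by trading `r.den • r ^ j` for `r.num • r ^ (j - 1)` as long as
possible. -/
def IsCanonical (r : ℚ) (m : Multiset ℕ) : Prop := ∀ j, 1 ≤ j → m.count j < r.den

lemma IsCanonical.mono {m m' : Multiset ℕ} (h : IsCanonical r m) (hle : m' ≤ m) :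
    IsCanonical r m' :=
  fun j hj => (count_le_of_le j hle).trans_lt (h j hj)

lemma count_zero_le_of_isCanonical_of_le (h0 : 0 < r) (M : ℕ) {m m' : Multiset ℕ}
    (hm : ∀ j ∈ m, j ≤ M) (hm' : ∀ j ∈ m', j ≤ M) (hcan : IsCanonical r m)
    (h : powSum r m' = powSum r m) : m'.count 0 ≤ m.count 0 := by
  induction M generalizing m m' with
  | zero =>
    rw [powSum_eq_count_zero fun j hj => Nat.le_zero.mp (hm j hj),
      powSum_eq_count_zero fun j hj => Nat.le_zero.mp (hm' j hj)] at h
    exact_mod_cast h.le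
  | succ M ih =>
    have hc : m.count (M + 1) < r.den := hcan _ le_add_self
    -- the top counts agree modulo `r.den`, and the one of `m` is the least residue
    obtain ⟨q, hq⟩ : ∃ q, m'.count (M + 1) = m.count (M + 1) + r.den * q := by
      have hmod := count_modEq_of_powSum_eq h0 hm' hm h
      rw [Nat.ModEq, Nat.mod_eq_of_lt hc] at hmod
      exact ⟨_, hmod ▸ (Nat.mod_add_div _ _).symm⟩
    have hbelow : ∀ mm : Multiset ℕ, (∀ j ∈ mm, j ≤ M + 1) →
        ∀ j ∈ mm.filter (· ≠ M + 1), j ≤ M := fun mm hmm j hj =>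
      Nat.le_of_lt_succ ((hmm j (mem_filter.mp hj).1).lt_of_ne (mem_filter.mp hj).2)
    have htrade : powSum r (m'.filter (· ≠ M + 1) + replicate (r.num.natAbs * q) M) =
        powSum r (m.filter (· ≠ M + 1)) := by
      have e := powSum_eq_count_add_filter (r := r) (M + 1) m
      have e' := powSum_eq_count_add_filter (r := r) (M + 1) m'
      have hd : (r.den : ℚ) * r ^ (M + 1) = r.num.natAbs * r ^ M := by
        rw [pow_succ', ← mul_assoc, den_mul_eq_num h0]
      rw [hq] at e'
      push_cast at e' ⊢
      rw [powSum_add, powSum_replicate]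
      push_cast
      linear_combination e - e' + h - q * hd
    have hle := ih (hbelow m hm) (fun j hj => ?_) (hcan.mono (filter_le _ m)) htrade
    · simp [count_filter_of_pos] at hle
      omega
    · rcases mem_add.mp hj with hj | hj
      · exact hbelow m' hm' j hj
      · exact (eq_of_mem_replicate hj).le

lemma count_zero_le_of_isCanonical (h0 : 0 < r) {m m' : Multiset ℕ} (hcan : IsCanonical r m)
    (h : powSum r m' = powSum r m) : m'.count 0 ≤ m.count 0 :=
  count_zero_le_of_isCanonical_of_le h0 (m.sup ⊔ m'.sup) (fun _ hj => le_sup_of_le_left (le_sup hj))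
    (fun _ hj => le_sup_of_le_right (le_sup hj)) hcan h

lemma not_dvdS_one_of_isCanonical (h0 : 0 < r) {m : Multiset ℕ} (hcan : IsCanonical r m)
    (hm : 0 ∉ m) : ¬ DvdS r 1 (powSum r m) := by
  intro hdvd
  obtain ⟨m', hm'⟩ := mem_S_iff.mp hdvd
  have := count_zero_le_of_isCanonical h0 hcan (m' := 0 ::ₘ m') (by simp [hm'])
  rw [count_cons_self, count_eq_zero.mpr hm] at this
  omega

lemma dvdS_one_natCast {c : ℕ} (hc : 1 ≤ c) : DvdS r 1 c := by
  rw [DvdS, ← Nat.cast_pred hc]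
  exact natCast_mem_S _

lemma dvdS_one_den_mul_pow (h1 : 1 < r) {e : ℕ} (he : 1 ≤ e) : DvdS r 1 (r.den * r ^ e) := by
  have h0 : 0 < r := one_pos.trans h1
  have hdn : r.den ≤ r.num.natAbs := by
    have : (r.den : ℚ) ≤ r.num.natAbs := by
      rw [← den_mul_eq_num h0]
      exact le_mul_of_one_le_right (Nat.cast_nonneg _) h1.le
    exact_mod_cast this
  induction e, he using Nat.le_induction with
  | base => rw [pow_one, den_mul_eq_num h0]; exact dvdS_one_natCast (r.pos.trans_le hdn)
  | succ e he ih =>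
    have : (r.den : ℚ) * r ^ (e + 1) - 1
        = powSum r (replicate (r.num.natAbs - r.den) e) + (r.den * r ^ e - 1) := by
      rw [powSum_replicate, Nat.cast_sub hdn, pow_succ', ← mul_assoc, den_mul_eq_num h0]
      ring
    rw [DvdS, this]
    exact add_mem (powSum_mem_S _) ih

end factorizations

section atoms

variable {r : ℚ}

lemma isAtomS_pow (h0 : 0 < r) {k : ℕ}
    (h : ∀ m : Multiset ℕ, (∀ j ∈ m, r ^ j < r ^ k) → powSum r m ≠ r ^ k) :
    IsAtomS r (r ^ k) := by
  refine ⟨pow_mem_S k, (pow_pos h0 k).ne', ?_⟩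
  rintro ⟨_, _, hy, hz, hy0, hz0, hyz⟩
  obtain ⟨my, rfl⟩ := mem_S_iff.mp hy
  obtain ⟨mz, rfl⟩ := mem_S_iff.mp hz
  have hypos := (powSum_nonneg h0.le my).lt_of_ne' hy0
  have hzpos := (powSum_nonneg h0.le mz).lt_of_ne' hz0
  refine h (my + mz) (fun j hj => ?_) (by rw [powSum_add, hyz])
  rcases mem_add.mp hj with hj | hj
  · linarith [pow_le_powSum h0.le hj]
  · linarith [pow_le_powSum h0.le hj]

lemma exists_pow_of_isAtomS (h0 : 0 < r) {a : ℚ} (ha : IsAtomS r a) : ∃ j : ℕ, a = r ^ j := by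
  obtain ⟨haS, ha0, hirr⟩ := ha
  obtain ⟨m, rfl⟩ := mem_S_iff.mp haS
  obtain ⟨j, hj⟩ := exists_mem_of_ne_zero (by rintro rfl; exact ha0 rfl : m ≠ 0)
  obtain ⟨m', rfl⟩ := exists_cons_of_mem hj
  refine ⟨j, ?_⟩
  obtain rfl | hm' := eq_or_ne m' 0
  · simp
  · exact (hirr ⟨r ^ j, powSum r m', pow_mem_S j, powSum_mem_S m', (pow_pos h0 j).ne',
      (powSum_pos h0 hm').ne', powSum_cons j m'⟩).elim

lemma isAtomS_pow_of_lt_one (h0 : 0 < r) (h1 : r < 1) (hn : 1 < r.num) (k : ℕ) :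
    IsAtomS r (r ^ k) :=
  isAtomS_pow h0 fun _ hm =>
    powSum_ne_pow_of_lt h0 hn fun j hj => (pow_lt_pow_iff_right_of_lt_one₀ h0 h1).mp (hm j hj)

lemma isAtomS_self_of_one_lt (h1 : 1 < r) (hd : r.den ≠ 1) : IsAtomS r r := by
  have hatom := isAtomS_pow (r := r) (k := 1) (one_pos.trans h1) fun m hm h => hd <| by
    have hm0 : ∀ j ∈ m, j = 0 := fun j hj =>
      Nat.lt_one_iff.mp ((pow_lt_pow_iff_right₀ h1).mp (hm j hj))
    rw [pow_one, powSum_eq_count_zero hm0] at h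
    rw [← h, Rat.den_natCast]
  rwa [pow_one] at hatom

end atoms

lemma omegaS_eq_top {r x : ℚ} (h : ∀ n, ¬ OmegaBound r x n) : omegaS r x = ⊤ := by
  rw [omegaS, sInf_eq_top]
  rintro _ ⟨n, -, hn⟩
  exact (h n hn).elim

lemma omegaS_eq {r x : ℚ} {N : ℕ} (hN : OmegaBound r x N)
    (hmin : ∀ n, OmegaBound r x n → N ≤ n) : omegaS r x = N :=
  le_antisymm (sInf_le ⟨N, rfl, hN⟩)
    (le_sInf fun _ ⟨n, hn, hb⟩ => hn ▸ Nat.cast_le.mpr (hmin n hb))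

section omega

variable {r : ℚ}

lemma not_omegaBound_one_of_lt_one (h0 : 0 < r) (h1 : r < 1) (hn : 1 < r.num) (N : ℕ) :
    ¬ OmegaBound r 1 N := by
  intro hN
  obtain ⟨k, hk⟩ := exists_pow_lt_of_lt_one (show (0 : ℚ) < 1 / (N + 1) by positivity) h1
  have hsum : ∑ _i : Fin (r.den ^ k), r ^ k = ((r.num.natAbs ^ k : ℕ) : ℚ) := by
    rw [Finset.sum_const, Finset.card_univ, Fintype.card_fin, nsmul_eq_mul, Nat.cast_pow,
      Nat.cast_pow, ← mul_pow, den_mul_eq_num h0]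
  obtain ⟨T, hT, hTdvd⟩ := hN _ _ (fun _ => isAtomS_pow_of_lt_one h0 h1 hn k)
    (hsum ▸ dvdS_one_natCast (Nat.one_le_pow _ _ (by omega)))
  have hnonneg := nonneg_of_mem_S h0.le hTdvd
  rw [Finset.sum_const, nsmul_eq_mul] at hnonneg
  have hTN : (T.card : ℚ) ≤ N := by exact_mod_cast hT
  rw [lt_div_iff₀ (by positivity)] at hk
  nlinarith [pow_pos h0 k]

lemma omegaBound_one_den (h1 : 1 < r) : OmegaBound r 1 r.den := by
  have h0 : 0 < r := one_pos.trans h1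
  intro t a ha hdvd
  choose e he using fun i => exists_pow_of_isAtomS h0 (ha i)
  set E := Finset.univ.val.map e
  by_cases hE0 : 0 ∈ E
  · obtain ⟨i, -, hi⟩ := mem_map.mp hE0
    refine ⟨{i}, (Finset.card_singleton i).trans_le r.pos, ?_⟩
    rw [Finset.sum_singleton, he i, hi, pow_zero, DvdS, sub_self]
    exact zero_mem _
  by_cases hcan : IsCanonical r E
  · refine absurd ?_ (not_dvdS_one_of_isCanonical h0 hcan hE0)
    rw [Finset.sum_congr rfl fun i _ => he i, Finset.sum_eq_multiset_sum] at hdvd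
    rwa [powSum, map_map]
  obtain ⟨j, hj1, hjc⟩ : ∃ j, 1 ≤ j ∧ r.den ≤ E.count j := by
    simpa [IsCanonical] using hcan
  rw [count_map, ← Finset.filter_val] at hjc
  obtain ⟨T, hTsub, hTcard⟩ := Finset.exists_subset_card_eq hjc
  refine ⟨T, hTcard.le, ?_⟩
  have hTsum : ∑ i ∈ T, a i = r.den * r ^ j := by
    rw [Finset.sum_congr rfl fun i hi => by rw [he i, ← (Finset.mem_filter.mp (hTsub hi)).2],
      Finset.sum_const, hTcard, nsmul_eq_mul]
  rw [hTsum]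
  exact dvdS_one_den_mul_pow h1 hj1

lemma den_le_of_omegaBound_one (h1 : 1 < r) (hd : r.den ≠ 1) {N : ℕ} (hN : OmegaBound r 1 N) :
    r.den ≤ N := by
  have h0 : 0 < r := one_pos.trans h1
  have hsum : ∑ _i : Fin r.den, r = r.num.natAbs := by
    rw [Finset.sum_const, Finset.card_univ, Fintype.card_fin, nsmul_eq_mul, den_mul_eq_num h0]
  obtain ⟨T, hT, hTdvd⟩ := hN r.den (fun _ => r) (fun _ => isAtomS_self_of_one_lt h1 hd)
    (hsum ▸ dvdS_one_natCast (by have := Rat.num_pos.mpr h0; omega))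
  have hTsum : ∑ _i ∈ T, r = powSum r (replicate T.card 1) := by simp
  by_contra! hlt
  refine not_dvdS_one_of_isCanonical h0 (fun j _ => ?_) (by simp [mem_replicate]) (hTsum ▸ hTdvd)
  rw [count_replicate]
  split_ifs <;> omega

end omega

theorem stmt18 (r : ℚ) (h0 : 0 < r) (hat : r = 1 ∨ 1 < r.num) :
    (r < 1 → omegaS r 1 = ⊤) ∧
    (1 < r → r.den ≠ 1 → omegaS r 1 = (r.den : ℕ∞)) := by
  exact ⟨fun h1 => omegaS_eq_top (not_omegaBound_one_of_lt_one h0 h1 (hat.resolve_left h1.ne)),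
    fun h1 hd => omegaS_eq (omegaBound_one_den h1) fun _ => den_le_of_omegaBound_one h1 hd⟩
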